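/- In H⁺, for all integers 1 ≤ a < b the following identities hold, where P denotes the palindromic product T_{b−1}T_{b−2}⋯T_{a+1}T_aT_{a+1}⋯T_{b−2}T_{b−1} and P' denotes T_{b−1}'T_{b−2}'⋯T_{a+1}'T_a'T_{a+1}'⋯T_{b−2}'T_{b−1}': X_bY_a = Y_aX_b + h·P'·Y_bX_b; X_bY_a = Y_aX_b + h·Y_aX_a·P'; Y_bX_a = X_aY_b − h·P·X_bY_b; Y_bX_a = X_aY_b − h·X_aY_a·P. -/

import Mathlib

/-!
STATEMENT 0: The standard words form a basis of the stable limit DAHA `H⁺` over `K = ℚ(h)`.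
Generator index `i : ℕ` represents the paper's index `i + 1 ≥ 1`.
-/

noncomputable section

abbrev Kfield : Type := RatFunc ℚ

/-- The variable `h` of `K = ℚ(h)`. -/
def hvar : Kfield := RatFunc.X

/-- Generators of the stable limit DAHA; index `i : ℕ` stands for the paper index `i + 1`. -/
inductive HGen : Type
  | T : ℕ → HGen
  | T' : ℕ → HGen
  | X : ℕ → HGen
  | Y : ℕ → HGen

open FreeAlgebra in
/-- The defining relations of the stable limit DAHA `H⁺`. -/
inductive HRel : FreeAlgebra Kfield HGen → FreeAlgebra Kfield HGen → Prop
  | TT' (i : ℕ) : HRel (ι Kfield (HGen.T i) * ι Kfield (HGen.T' i)) 1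
  | T'T (i : ℕ) : HRel (ι Kfield (HGen.T' i) * ι Kfield (HGen.T i)) 1
  | TminusT' (i : ℕ) :
      HRel (ι Kfield (HGen.T i) - ι Kfield (HGen.T' i))
        (algebraMap Kfield (FreeAlgebra Kfield HGen) hvar)
  | Tcomm (i j : ℕ) (hij : i + 1 < j ∨ j + 1 < i) :
      HRel (ι Kfield (HGen.T i) * ι Kfield (HGen.T j))
        (ι Kfield (HGen.T j) * ι Kfield (HGen.T i))
  | braid (i : ℕ) :
      HRel (ι Kfield (HGen.T i) * ι Kfield (HGen.T (i + 1)) * ι Kfield (HGen.T i))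
        (ι Kfield (HGen.T (i + 1)) * ι Kfield (HGen.T i) * ι Kfield (HGen.T (i + 1)))
  | TXT (i : ℕ) :
      HRel (ι Kfield (HGen.T' i) * ι Kfield (HGen.X i) * ι Kfield (HGen.T' i))
        (ι Kfield (HGen.X (i + 1)))
  | TX (i j : ℕ) (h1 : j ≠ i) (h2 : j ≠ i + 1) :
      HRel (ι Kfield (HGen.T i) * ι Kfield (HGen.X j))
        (ι Kfield (HGen.X j) * ι Kfield (HGen.T i))
  | XX (i j : ℕ) :
      HRel (ι Kfield (HGen.X i) * ι Kfield (HGen.X j))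
        (ι Kfield (HGen.X j) * ι Kfield (HGen.X i))
  | TYT (i : ℕ) :
      HRel (ι Kfield (HGen.T i) * ι Kfield (HGen.Y i) * ι Kfield (HGen.T i))
        (ι Kfield (HGen.Y (i + 1)))
  | TY (i j : ℕ) (h1 : j ≠ i) (h2 : j ≠ i + 1) :
      HRel (ι Kfield (HGen.T i) * ι Kfield (HGen.Y j))
        (ι Kfield (HGen.Y j) * ι Kfield (HGen.T i))
  | YY (i j : ℕ) :
      HRel (ι Kfield (HGen.Y i) * ι Kfield (HGen.Y j))
        (ι Kfield (HGen.Y j) * ι Kfield (HGen.Y i))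
  | cross :
      HRel (ι Kfield (HGen.Y 0) * ι Kfield (HGen.T 0) * ι Kfield (HGen.X 0))
        (ι Kfield (HGen.X 1) * ι Kfield (HGen.Y 0) * ι Kfield (HGen.T 0))

/-- The stable limit DAHA `H⁺`. -/
abbrev Hplus : Type := RingQuot HRel

/-- The image in `H⁺` of a generator. -/
def gen (g : HGen) : Hplus := RingQuot.mkAlgHom Kfield HRel (FreeAlgebra.ι Kfield g)

/-- A letter of the two-letter alphabet `{X_i, Y_i}`: `true ↦ X_i`, `false ↦ Y_i`. -/
def letterElem (i : ℕ) (b : Bool) : Hplus := if b then gen (HGen.X i) else gen (HGen.Y i)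

/-- The element of `H⁺` corresponding to a word `u` in the alphabet `{X_i, Y_i}`. -/
def wordElem (i : ℕ) (u : List Bool) : Hplus := (u.map (letterElem i)).prod

/-- Permutations of `{1, 2, …}` (here realized as `ℕ`) moving only finitely many points. -/
def FinPerm : Type := {w : Equiv.Perm ℕ // {i | w i ≠ i}.Finite}

/-- The adjacent transposition `s_i = (i, i+1)`. -/
def swapAdj (i : ℕ) : Equiv.Perm ℕ := Equiv.swap i (i + 1)

/-- The permutation `s_{i₁} ⋯ s_{i_ℓ}` represented by a list of indices. -/
def wordPerm (l : List ℕ) : Equiv.Perm ℕ := (l.map swapAdj).prod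

/-- The element `T_{i₁} ⋯ T_{i_ℓ}` of `H⁺` attached to a list of indices. -/
def Tword (l : List ℕ) : Hplus := (l.map (fun i => gen (HGen.T i))).prod

instance : Zero (List Bool) := ⟨[]⟩

/-- The ordered product `u₁ u₂ ⋯ u_k` in `H⁺`. -/
def uProd (u : ℕ →₀ List Bool) (k : ℕ) : Hplus :=
  ((List.range k).map (fun i => wordElem i (u i))).prod


/-- The list `[hi, hi-1, …, lo, lo+1, …, hi]` of indices of a palindromic product
`T_hi ⋯ T_lo ⋯ T_hi` (Lean 0-based indices). -/
def palList (lo hi : ℕ) : List ℕ :=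
  (List.range' lo (hi + 1 - lo)).reverse ++ List.range' (lo + 1) (hi - lo)

/-- The palindromic product `T_{b-1} T_{b-2} ⋯ T_{a+1} T_a T_{a+1} ⋯ T_{b-2} T_{b-1}`
(paper indices, `a < b`); in Lean's 0-based encoding this is the palindrome over
indices `a-1, …, b-2`. -/
def palT (lo hi : ℕ) : Hplus := ((palList lo hi).map (fun i => gen (HGen.T i))).prod

/-- `T_{b-1}' T_{b-2}' ⋯ T_{a+1}' T_a' T_{a+1}' ⋯ T_{b-2}' T_{b-1}'`. -/
def palT' (lo hi : ℕ) : Hplus := ((palList lo hi).map (fun i => gen (HGen.T' i))).prod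

/-!
The adjacent case `b = a + 1` comes from the cross relation `Y_a T_a X_a = X_{a+1} Y_a T_a`,
which propagates from `a = 1` to every `a` through the braid relation, combined with
`T_a = T_a' + h`. Induction on `b` does the rest: `X_{b+1} = T_b' X_b T_b'` and
`Y_{b+1} = T_b Y_b T_b`, and sandwiching by `T_b'` (resp. `T_b`), which commutes with `X_a`, `Y_a`
and `h`, turns the palindrome ending at `b` into the one ending at `b + 1`. This gives the second
and fourth identities; the first and third follow because `P'` intertwines `Y_b X_b` with
`Y_a X_a`, and `P` intertwines `X_b Y_b` with `X_a Y_a`.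
-/

local notation "T[" i "]" => gen (HGen.T i)
local notation "T'[" i "]" => gen (HGen.T' i)
local notation "X[" i "]" => gen (HGen.X i)
local notation "Y[" i "]" => gen (HGen.Y i)
local notation "ℏ" => algebraMap Kfield Hplus hvar

section Palindrome

variable {M : Type*} [Monoid M] (f : ℕ → M)

theorem palList_self (a : ℕ) : palList a a = [a] := by
  simp [palList]

theorem palList_succ {a b : ℕ} (hab : a ≤ b) :
    palList a (b + 1) = (b + 1) :: (palList a b ++ [b + 1]) := by
  have h₁ : b + 1 + 1 - a = b + 1 - a + 1 := by omega
  have h₂ : b + 1 - a = b - a + 1 := by omega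
  have h₃ : a + (b + 1 - a) = b + 1 := by omega
  have h₄ : a + 1 + (b - a) = b + 1 := by omega
  simp only [palList]
  rw [h₁, List.range'_1_concat, h₃, h₂, List.range'_1_concat (s := a),
    List.range'_1_concat (s := a + 1), h₄]
  simp

theorem prod_map_palList_self (a : ℕ) : ((palList a a).map f).prod = f a := by
  simp [palList_self]

theorem prod_map_palList_succ {a b : ℕ} (hab : a ≤ b) :
    ((palList a (b + 1)).map f).prod = f (b + 1) * ((palList a b).map f).prod * f (b + 1) := by
  simp [palList_succ hab, mul_assoc]

theorem prod_map_palList_mul (g : ℕ → M) (hfg : ∀ i, f i * g (i + 1) = g i * f i)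
    (hcomm : ∀ i j, j < i → Commute (f i) (g j)) {a b : ℕ} (hab : a ≤ b) :
    ((palList a b).map f).prod * g (b + 1) = g a * ((palList a b).map f).prod := by
  induction b, hab using Nat.le_induction with
  | base => rw [prod_map_palList_self, hfg]
  | succ b hab ih =>
    rw [prod_map_palList_succ f hab]
    set P := ((palList a b).map f).prod
    calc f (b + 1) * P * f (b + 1) * g (b + 1 + 1) = f (b + 1) * (P * g (b + 1)) * f (b + 1) := by
          rw [mul_assoc, hfg]; simp only [mul_assoc]
      _ = g a * (f (b + 1) * P * f (b + 1)) := by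
          rw [ih, ← mul_assoc, (hcomm (b + 1) a (by omega)).eq]; simp only [mul_assoc]

end Palindrome

section Sandwich

variable {A : Type*} [NonUnitalSemiring A] {c x y w p : A}

theorem mul_mul_mul_mul_eq_of_commute (hy : Commute c y) (hw : Commute c w)
    (h : x * y = y * x + w * p) : c * x * c * y = y * (c * x * c) + w * (c * p * c) := by
  calc c * x * c * y = c * (x * y) * c := by rw [mul_assoc _ c, hy.eq]; simp only [mul_assoc]
    _ = y * (c * x * c) + w * (c * p * c) := by
      rw [h, mul_add, add_mul, ← mul_assoc c y, hy.eq, ← mul_assoc c w, hw.eq]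
      simp only [mul_assoc]

theorem mul_mul_mul_mul_eq_of_commute' (hy : Commute c y) (hw : Commute c w)
    (h : y * x = x * y + w * p) : y * (c * x * c) = c * x * c * y + w * (c * p * c) := by
  calc y * (c * x * c) = c * (y * x) * c := by
        rw [← mul_assoc y, ← mul_assoc y, ← hy.eq]; simp only [mul_assoc]
    _ = c * x * c * y + w * (c * p * c) := by
      rw [h, mul_add, add_mul, ← mul_assoc c w, hw.eq, ← mul_assoc c x y, mul_assoc _ y c,
        ← hy.eq]
      simp only [mul_assoc]

end Sandwich

namespace Hplus

theorem T_mul_T' (i : ℕ) : T[i] * T'[i] = 1 := by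
  simpa only [gen, map_mul, map_one] using RingQuot.mkAlgHom_rel Kfield (HRel.TT' i)

theorem T'_mul_T (i : ℕ) : T'[i] * T[i] = 1 := by
  simpa only [gen, map_mul, map_one] using RingQuot.mkAlgHom_rel Kfield (HRel.T'T i)

theorem T_eq_T'_add (i : ℕ) : T[i] = T'[i] + ℏ := by
  have h := RingQuot.mkAlgHom_rel Kfield (HRel.TminusT' i)
  rw [map_sub, AlgHom.commutes] at h
  exact eq_add_of_sub_eq' h

theorem commute_T_X {i j : ℕ} (h₁ : j ≠ i) (h₂ : j ≠ i + 1) : Commute T[i] X[j] := by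
  show T[i] * X[j] = X[j] * T[i]
  simpa only [gen, map_mul] using RingQuot.mkAlgHom_rel Kfield (HRel.TX i j h₁ h₂)

theorem commute_T_Y {i j : ℕ} (h₁ : j ≠ i) (h₂ : j ≠ i + 1) : Commute T[i] Y[j] := by
  show T[i] * Y[j] = Y[j] * T[i]
  simpa only [gen, map_mul] using RingQuot.mkAlgHom_rel Kfield (HRel.TY i j h₁ h₂)

theorem T'_mul_X_mul_T' (i : ℕ) : T'[i] * X[i] * T'[i] = X[i + 1] := by
  simpa only [gen, map_mul] using RingQuot.mkAlgHom_rel Kfield (HRel.TXT i)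

theorem T_mul_Y_mul_T (i : ℕ) : T[i] * Y[i] * T[i] = Y[i + 1] := by
  simpa only [gen, map_mul] using RingQuot.mkAlgHom_rel Kfield (HRel.TYT i)

theorem T_mul_T_mul_T (i : ℕ) : T[i] * T[i + 1] * T[i] = T[i + 1] * T[i] * T[i + 1] := by
  simpa only [gen, map_mul] using RingQuot.mkAlgHom_rel Kfield (HRel.braid i)

theorem Y_mul_T_mul_X_zero : Y[0] * T[0] * X[0] = X[1] * Y[0] * T[0] := by
  simpa only [gen, map_mul] using RingQuot.mkAlgHom_rel Kfield HRel.cross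

def unitT (i : ℕ) : Hplusˣ := ⟨T[i], T'[i], T_mul_T' i, T'_mul_T i⟩

theorem commute_T'_X {i j : ℕ} (h₁ : j ≠ i) (h₂ : j ≠ i + 1) : Commute T'[i] X[j] :=
  (commute_T_X h₁ h₂).units_inv_left (u := unitT i)

theorem commute_T'_Y {i j : ℕ} (h₁ : j ≠ i) (h₂ : j ≠ i + 1) : Commute T'[i] Y[j] :=
  (commute_T_Y h₁ h₂).units_inv_left (u := unitT i)

-- Relations stated with a trailing factor `z` rewrite inside right-associated products.
theorem T_mul_T'_mul (i : ℕ) (z : Hplus) : T[i] * (T'[i] * z) = z :=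
  (unitT i).mul_inv_cancel_left z

theorem T'_mul_T_mul (i : ℕ) (z : Hplus) : T'[i] * (T[i] * z) = z :=
  (unitT i).inv_mul_cancel_left z

theorem X_succ_mul_T_mul (i : ℕ) (z : Hplus) : X[i + 1] * (T[i] * z) = T'[i] * (X[i] * z) := by
  rw [← T'_mul_X_mul_T']; simp only [mul_assoc, T'_mul_T_mul]

theorem T_mul_X_succ_mul (i : ℕ) (z : Hplus) : T[i] * (X[i + 1] * z) = X[i] * (T'[i] * z) := by
  rw [← T'_mul_X_mul_T']; simp only [mul_assoc, T_mul_T'_mul]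

theorem T'_mul_Y_succ_mul (i : ℕ) (z : Hplus) : T'[i] * (Y[i + 1] * z) = Y[i] * (T[i] * z) := by
  rw [← T_mul_Y_mul_T]; simp only [mul_assoc, T'_mul_T_mul]

theorem Y_mul_T_mul_X_mul (i : ℕ) (z : Hplus) :
    Y[i] * (T[i] * (X[i] * z)) = X[i + 1] * (Y[i] * (T[i] * z)) := by
  induction i generalizing z with
  | zero => simpa only [mul_assoc] using congrArg (· * z) Y_mul_T_mul_X_zero
  | succ i ih =>
    have braid_left (w : Hplus) :
        T[i + 1] * (T[i] * (T[i + 1] * (T'[i] * w))) = T[i] * (T[i + 1] * w) := by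
      simp only [← mul_assoc, ← T_mul_T_mul_T, mul_assoc _ T[i] T'[i], T_mul_T', mul_one]
    have braid_right (w : Hplus) :
        T[i] * (T[i + 1] * (T'[i] * w)) = T'[i + 1] * (T[i] * (T[i + 1] * w)) := by
      rw [← braid_left w, T'_mul_T_mul]
    calc Y[i + 1] * (T[i + 1] * (X[i + 1] * z))
        = T[i] * (Y[i] * (T[i] * (T[i + 1] * (T'[i] * (X[i] * (T'[i] * z)))))) := by
          rw [← T_mul_Y_mul_T, ← T'_mul_X_mul_T']; simp only [mul_assoc]
      _ = T[i] * (T'[i + 1] * (Y[i] * (T[i] * (X[i] * (T[i + 1] * (T'[i] * z)))))) := by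
          rw [braid_right, (commute_T'_Y (by omega) (by omega)).left_comm,
            (commute_T_X (i := i + 1) (j := i) (by omega) (by omega)).left_comm]
      _ = T[i] * (X[i + 1 + 1] * (T[i + 1] * (Y[i] * (T[i] * (T[i + 1] * (T'[i] * z)))))) := by
          rw [ih, ← X_succ_mul_T_mul]
      _ = X[i + 1 + 1] * (T[i] * (Y[i] * (T[i] * (T[i + 1] * z)))) := by
          rw [(commute_T_X (by omega) (by omega)).left_comm,
            (commute_T_Y (i := i + 1) (j := i) (by omega) (by omega)).left_comm, braid_left]
      _ = X[i + 1 + 1] * (Y[i + 1] * (T[i + 1] * z)) := by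
          rw [← T_mul_Y_mul_T]; simp only [mul_assoc]

theorem Y_mul_T_mul_X (i : ℕ) : Y[i] * (T[i] * X[i]) = X[i + 1] * (Y[i] * T[i]) := by
  simpa only [mul_one] using Y_mul_T_mul_X_mul i 1

theorem X_succ_mul_Y (a : ℕ) :
    X[a + 1] * Y[a] = Y[a] * X[a + 1] + ℏ * (Y[a] * X[a] * T'[a]) :=
  calc X[a + 1] * Y[a] = Y[a] * (T[a] * (X[a] * T'[a])) := by
        rw [Y_mul_T_mul_X_mul, T_mul_T', mul_one]
    _ = Y[a] * ((T'[a] + ℏ) * (X[a] * T'[a])) := by rw [← T_eq_T'_add]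
    _ = Y[a] * X[a + 1] + ℏ * (Y[a] * X[a] * T'[a]) := by
        rw [add_mul, mul_add, Algebra.left_comm, ← T'_mul_X_mul_T']; simp only [mul_assoc]

theorem X_mul_Y_succ (a : ℕ) :
    X[a] * Y[a + 1] = Y[a + 1] * X[a] + ℏ * (X[a] * Y[a] * T[a]) := by
  have hYX : Y[a + 1] * X[a] = X[a] * (T'[a] * (Y[a] * T[a])) := by
    rw [← T_mul_Y_mul_T]; simp only [mul_assoc]; rw [Y_mul_T_mul_X, T_mul_X_succ_mul]
  calc X[a] * Y[a + 1] = X[a] * (T[a] * (Y[a] * T[a])) := by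
        rw [← T_mul_Y_mul_T]; simp only [mul_assoc]
    _ = X[a] * ((T'[a] + ℏ) * (Y[a] * T[a])) := by rw [← T_eq_T'_add]
    _ = Y[a + 1] * X[a] + ℏ * (X[a] * Y[a] * T[a]) := by
        rw [add_mul, mul_add, Algebra.left_comm, hYX]; simp only [mul_assoc]

theorem X_succ_mul_Y_of_le {a b : ℕ} (hab : a ≤ b) :
    X[b + 1] * Y[a] = Y[a] * X[b + 1] + ℏ * (Y[a] * X[a] * palT' a b) := by
  induction b, hab using Nat.le_induction with
  | base => rw [palT', prod_map_palList_self]; exact X_succ_mul_Y a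
  | succ b hab ih =>
    have hY : Commute T'[b + 1] Y[a] := commute_T'_Y (by omega) (by omega)
    have hX : Commute T'[b + 1] X[a] := commute_T'_X (by omega) (by omega)
    rw [palT', prod_map_palList_succ _ hab, ← palT', ← T'_mul_X_mul_T', ← mul_assoc ℏ]
    exact mul_mul_mul_mul_eq_of_commute hY
      ((Algebra.commute_algebraMap_right _ _).mul_right (hY.mul_right hX))
      (by rw [ih, mul_assoc ℏ])

theorem X_mul_Y_succ_of_le {a b : ℕ} (hab : a ≤ b) :
    X[a] * Y[b + 1] = Y[b + 1] * X[a] + ℏ * (X[a] * Y[a] * palT a b) := by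
  induction b, hab using Nat.le_induction with
  | base => rw [palT, prod_map_palList_self]; exact X_mul_Y_succ a
  | succ b hab ih =>
    have hX : Commute T[b + 1] X[a] := commute_T_X (by omega) (by omega)
    have hY : Commute T[b + 1] Y[a] := commute_T_Y (by omega) (by omega)
    rw [palT, prod_map_palList_succ _ hab, ← palT, ← T_mul_Y_mul_T, ← mul_assoc ℏ]
    exact mul_mul_mul_mul_eq_of_commute' hX
      ((Algebra.commute_algebraMap_right _ _).mul_right (hX.mul_right hY))
      (by rw [ih, mul_assoc ℏ])

theorem T'_mul_Y_succ_mul_X_succ (i : ℕ) :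
    T'[i] * (Y[i + 1] * X[i + 1]) = Y[i] * X[i] * T'[i] := by
  rw [T'_mul_Y_succ_mul, ← T'_mul_X_mul_T']; simp only [mul_assoc, T_mul_T'_mul]

theorem T_mul_X_succ_mul_Y_succ (i : ℕ) :
    T[i] * (X[i + 1] * Y[i + 1]) = X[i] * Y[i] * T[i] := by
  rw [T_mul_X_succ_mul, ← T_mul_Y_mul_T]; simp only [mul_assoc, T'_mul_T_mul]

theorem palT'_mul_Y_mul_X {a b : ℕ} (hab : a ≤ b) :
    palT' a b * (Y[b + 1] * X[b + 1]) = Y[a] * X[a] * palT' a b :=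
  prod_map_palList_mul _ (fun i => Y[i] * X[i]) T'_mul_Y_succ_mul_X_succ
    (fun _ _ hji => (commute_T'_Y (by omega) (by omega)).mul_right
      (commute_T'_X (by omega) (by omega))) hab

theorem palT_mul_X_mul_Y {a b : ℕ} (hab : a ≤ b) :
    palT a b * (X[b + 1] * Y[b + 1]) = X[a] * Y[a] * palT a b :=
  prod_map_palList_mul _ (fun i => X[i] * Y[i]) T_mul_X_succ_mul_Y_succ
    (fun _ _ hji => (commute_T_X (by omega) (by omega)).mul_right
      (commute_T_Y (by omega) (by omega))) hab

end Hplus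

/-- In `H⁺`, for all `1 ≤ a < b` (paper indices; in Lean's 0-based encoding below, `a b : ℕ`
with `a < b` stand for the paper indices `a+1 < b+1`):
`X_bY_a = Y_aX_b + h·P'·Y_bX_b`, `X_bY_a = Y_aX_b + h·Y_aX_a·P'`,
`Y_bX_a = X_aY_b − h·P·X_bY_b`, `Y_bX_a = X_aY_b − h·X_aY_a·P`,
where `P = T_{b−1}⋯T_{a+1}T_aT_{a+1}⋯T_{b−1}` and `P'` is the same palindrome in the `T_i'`. -/
theorem statement4 (a b : ℕ) (hab : a < b) :
    (gen (HGen.X b) * gen (HGen.Y a) =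
        gen (HGen.Y a) * gen (HGen.X b) +
          algebraMap Kfield Hplus hvar * (palT' a (b - 1) * (gen (HGen.Y b) * gen (HGen.X b)))) ∧
    (gen (HGen.X b) * gen (HGen.Y a) =
        gen (HGen.Y a) * gen (HGen.X b) +
          algebraMap Kfield Hplus hvar * (gen (HGen.Y a) * gen (HGen.X a) * palT' a (b - 1))) ∧
    (gen (HGen.Y b) * gen (HGen.X a) =
        gen (HGen.X a) * gen (HGen.Y b) -
          algebraMap Kfield Hplus hvar * (palT a (b - 1) * (gen (HGen.X b) * gen (HGen.Y b)))) ∧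
    (gen (HGen.Y b) * gen (HGen.X a) =
        gen (HGen.X a) * gen (HGen.Y b) -
          algebraMap Kfield Hplus hvar * (gen (HGen.X a) * gen (HGen.Y a) * palT a (b - 1))) := by
  obtain ⟨c, rfl⟩ : ∃ c, b = c + 1 := ⟨b - 1, by omega⟩
  have hac : a ≤ c := Nat.le_of_lt_succ hab
  rw [Nat.add_sub_cancel]
  have hXY := Hplus.X_succ_mul_Y_of_le hac
  have hYX := eq_sub_of_add_eq (Hplus.X_mul_Y_succ_of_le hac).symm
  exact ⟨by rwa [Hplus.palT'_mul_Y_mul_X hac], hXY, by rwa [Hplus.palT_mul_X_mul_Y hac], hYX⟩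

end
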